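/- arXiv:1604.05609 — 5 statements merged into one kernel-verified Lean document; each statement's English description precedes it below -/
import Mathlib

section
/- Any directed forest (a set of arcs F with out-degree at most 1 at every vertex whose underlying undirected graph is acyclic) can be partitioned into two arc sets M₁ and M₂ such that each Mᵢ is a valid carpool matching: there is a partition of V into Pᵢ and Dᵢ with all arcs of Mᵢ going from Pᵢ to Dᵢ, and every vertex has out-degree at most 1 in Mᵢ. Concretely, a proper 2-coloring of each tree yields this decomposition. -/
open Finset

variable {V : Type*} [Fintype V] [DecidableEq V]

/-- In-degree of `v` in the arc set `M`. -/
def inDeg (M : Finset (V × V)) (v : V) : ℕ := (M.filter (fun e => e.2 = v)).card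

/-- Out-degree of `v` in the arc set `M`. -/
def outDeg (M : Finset (V × V)) (v : V) : ℕ := (M.filter (fun e => e.1 = v)).card

/-- `(P, D, M)` is a feasible carpool matching in the digraph with arc set `A`
and capacities `c`. -/
def IsCarpool (A : Finset (V × V)) (c : V → ℕ) (P D : Finset V)
    (M : Finset (V × V)) : Prop :=
  Disjoint P D ∧ P ∪ D = Finset.univ ∧ M ⊆ A ∧
  (∀ e ∈ M, e.1 ∈ P ∧ e.2 ∈ D) ∧
  (∀ d ∈ D, inDeg M d ≤ c d) ∧ (∀ p ∈ P, outDeg M p ≤ 1)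

lemma bypass_parity {G : SimpleGraph V} (hG : G.IsAcyclic) :
    ∀ {u v : V} (p : G.Walk u v), p.length % 2 = p.bypass.length % 2 := by
  intro u v p
  induction p with
  | nil => rfl
  | @cons u w v h p ih =>
    simp only [SimpleGraph.Walk.bypass]
    split_ifs with hs
    · have hsp : (p.bypass.takeUntil u hs).IsPath :=
        (SimpleGraph.Walk.bypass_isPath p).takeUntil hs
      have h1 : p.bypass.takeUntil u hs =
          (SimpleGraph.Path.singleton h.symm : G.Walk w u) := by
        have := hG.path_unique ⟨p.bypass.takeUntil u hs, hsp⟩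
          (SimpleGraph.Path.singleton h.symm)
        exact congrArg Subtype.val this
      have h2 : (p.bypass.takeUntil u hs).length = 1 := by
        rw [h1]; rfl
      have h4 : (p.bypass.takeUntil u hs).length +
          (p.bypass.dropUntil u hs).length = p.bypass.length := by
        rw [← SimpleGraph.Walk.length_append, SimpleGraph.Walk.take_spec]
      simp only [SimpleGraph.Walk.length_cons]
      omega
    · simp only [SimpleGraph.Walk.length_cons]
      omega

lemma closed_even {G : SimpleGraph V} (hG : G.IsAcyclic) {v : V} (p : G.Walk v v) :
    p.length % 2 = 0 := by
  have h1 := bypass_parity hG p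
  have h2 : p.toPath = (⟨SimpleGraph.Walk.nil, SimpleGraph.Walk.IsPath.nil⟩ : G.Path v v) :=
    hG.path_unique _ _
  have h3 : (p.toPath : G.Walk v v).length = 0 := by rw [h2]; rfl
  have : p.bypass.length = 0 := h3
  omega

lemma walk_parity {G : SimpleGraph V} (hG : G.IsAcyclic) {u v : V}
    (p q : G.Walk u v) : p.length % 2 = q.length % 2 := by
  have := closed_even hG (p.append q.reverse)
  rw [SimpleGraph.Walk.length_append, SimpleGraph.Walk.length_reverse] at this
  omega

lemma exists_two_coloring {G : SimpleGraph V} (hG : G.IsAcyclic) :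
    ∃ f : V → ℕ, ∀ u v : V, G.Adj u v → f u ≠ f v ∧ f u ≤ 1 := by
  classical
  have hreach : ∀ v : V, G.Reachable (G.connectedComponentMk v).out v := by
    intro v
    exact SimpleGraph.ConnectedComponent.exact ((G.connectedComponentMk v).out_eq)
  refine ⟨fun v => (hreach v).some.length % 2, ?_⟩
  intro u v hadj
  refine ⟨?_, Nat.le_of_lt_succ (Nat.mod_lt _ (by norm_num))⟩
  simp only
  have hcomp : G.connectedComponentMk u = G.connectedComponentMk v :=
    SimpleGraph.ConnectedComponent.connectedComponentMk_eq_of_adj hadj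
  set wv' : G.Walk (G.connectedComponentMk v).out v :=
    ((hreach u).some.concat hadj).copy (by rw [hcomp]) rfl with hwv'
  have hlen : wv'.length = (hreach u).some.length + 1 := by
    rw [hwv', SimpleGraph.Walk.length_copy, SimpleGraph.Walk.length_concat]
  have := walk_parity hG (hreach v).some wv'
  omega

lemma outDeg_mono {M F : Finset (V × V)} (h : M ⊆ F) (v : V) :
    outDeg M v ≤ outDeg F v :=
  Finset.card_le_card (Finset.filter_subset_filter _ h)

theorem forest_decomposes_into_two_matchings (A : Finset (V × V))
    (F : Finset (V × V)) (hFA : F ⊆ A) (hout : ∀ v : V, outDeg F v ≤ 1)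
    (hloop : ∀ v : V, (v, v) ∉ F)
    (hanti : ∀ u v : V, (u, v) ∈ F → (v, u) ∉ F)
    (hacyclic : (SimpleGraph.fromRel (fun u v => (u, v) ∈ F)).IsAcyclic) :
    ∃ M₁ M₂ : Finset (V × V), Disjoint M₁ M₂ ∧ M₁ ∪ M₂ = F ∧
      (∀ M ∈ ({M₁, M₂} : Finset (Finset (V × V))),
        ∃ P D : Finset V, Disjoint P D ∧ P ∪ D = Finset.univ ∧
          (∀ e ∈ M, e.1 ∈ P ∧ e.2 ∈ D) ∧ (∀ v : V, outDeg M v ≤ 1)) := by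
  classical
  obtain ⟨f, hf⟩ := exists_two_coloring hacyclic
  have hcol : ∀ e ∈ F, f e.1 ≠ f e.2 := by
    intro e he
    have hne : e.1 ≠ e.2 := by
      intro h
      apply hloop e.1
      have : e = (e.1, e.2) := rfl
      rw [this, ← h] at he
      exact he
    exact (hf e.1 e.2 (SimpleGraph.fromRel_adj .. |>.mpr ⟨hne, Or.inl he⟩)).1
  refine ⟨F.filter (fun e => f e.1 = 0), F.filter (fun e => ¬ f e.1 = 0),
    Finset.disjoint_filter_filter_not F F _, Finset.filter_union_filter_not_eq _ F, ?_⟩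
  intro M hM
  have hM' : M = F.filter (fun e => f e.1 = 0) ∨ M = F.filter (fun e => ¬ f e.1 = 0) := by
    simpa using hM
  rcases hM' with rfl | rfl
  · refine ⟨Finset.univ.filter (fun v => f v = 0), Finset.univ.filter (fun v => ¬ f v = 0),
      Finset.disjoint_filter_filter_not _ _ _, Finset.filter_union_filter_not_eq _ _, ?_, ?_⟩
    · intro e he
      rw [Finset.mem_filter] at he
      refine ⟨Finset.mem_filter.mpr ⟨Finset.mem_univ _, he.2⟩,
        Finset.mem_filter.mpr ⟨Finset.mem_univ _, ?_⟩⟩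
      have := hcol e he.1
      omega
    · intro v
      exact le_trans (outDeg_mono (Finset.filter_subset _ _) v) (hout v)
  · refine ⟨Finset.univ.filter (fun v => ¬ f v = 0), Finset.univ.filter (fun v => f v = 0),
      (Finset.disjoint_filter_filter_not _ _ _).symm, ?_, ?_, ?_⟩
    · rw [Finset.union_comm]; exact Finset.filter_union_filter_not_eq _ _
    · intro e he
      rw [Finset.mem_filter] at he
      refine ⟨Finset.mem_filter.mpr ⟨Finset.mem_univ _, he.2⟩,
        Finset.mem_filter.mpr ⟨Finset.mem_univ _, ?_⟩⟩
      have h1 := hcol e he.1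
      have h2 := (hf e.2 e.1 (SimpleGraph.fromRel_adj .. |>.mpr
        ⟨fun h => hloop e.1 (by rw [show e = (e.1, e.2) from rfl, h] at he; exact he.1), Or.inr he.1⟩)).2
      have h3 := he.2
      have h4 := (hf e.1 e.2 (SimpleGraph.fromRel_adj .. |>.mpr
        ⟨fun h => hloop e.1 (by rw [show e = (e.1, e.2) from rfl, ← h] at he; exact he.1), Or.inl he.1⟩)).2
      omega
    · intro v
      exact le_trans (outDeg_mono (Finset.filter_subset _ _) v) (hout v)
end

section
/- The local search algorithm for unweighted carpool matching is a 2-approximation: if M is a carpool matching satisfying the three local-optimality properties (no arc of an optimal matching M* joins two free vertices of M; no two distinct free vertices of M are both matched in M* to the same M-passenger that has an M-arc; every free vertex of M matched in M* to an M-driver implies that driver is saturated in M), then |M*| ≤ 2|M|. -/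
open Finset

variable {V : Type*} [Fintype V] [DecidableEq V]

/-- Passengers of `M`: vertices with out-degree one. -/
def PM (M : Finset (V × V)) : Finset V :=
  Finset.univ.filter (fun v => outDeg M v = 1)

/-- Drivers of `M`: vertices with positive in-degree. -/
def DM (M : Finset (V × V)) : Finset V :=
  Finset.univ.filter (fun v => 0 < inDeg M v)

/-- Free vertices of `M`: vertices with in-degree and out-degree zero. -/
def FM (M : Finset (V × V)) : Finset V :=
  Finset.univ.filter (fun v => inDeg M v = 0 ∧ outDeg M v = 0)

lemma sum_inDeg (M : Finset (V × V)) : ∑ v, inDeg M v = M.card :=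
  (Finset.card_eq_sum_card_fiberwise (fun e _ => Finset.mem_univ e.2)).symm

lemma sum_outDeg (M : Finset (V × V)) : ∑ v, outDeg M v = M.card :=
  (Finset.card_eq_sum_card_fiberwise (fun e _ => Finset.mem_univ e.1)).symm

/-- the local search algorithm is a 2-approximation: if the
carpool matching `M` satisfies the three local-optimality properties with
respect to a carpool matching `Mstar`, then `|Mstar| ≤ 2 |M|`. -/
theorem local_search_two_approx (A : Finset (V × V)) (c : V → ℕ)
    (P D : Finset V) (M : Finset (V × V)) (hM : IsCarpool A c P D M)
    (Pstar Dstar : Finset V) (Mstar : Finset (V × V))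
    (hMstar : IsCarpool A c Pstar Dstar Mstar)
    (h1 : ∀ e ∈ Mstar, ¬ (e.1 ∈ FM M ∧ e.2 ∈ FM M))
    (h2 : ∀ p ∈ PM M, ∀ f₁ ∈ FM M, ∀ f₂ ∈ FM M,
      (f₁, p) ∈ Mstar → (f₂, p) ∈ Mstar → f₁ = f₂)
    (h3 : ∀ f ∈ FM M, ∀ d ∈ DM M, (f, d) ∈ Mstar → inDeg M d = c d) :
    Mstar.card ≤ 2 * M.card := by
  classical
  obtain ⟨hMdisj, hMcov, hMA, hMpd, hMin, hMout⟩ := hM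
  obtain ⟨hSdisj, hScov, hSA, hSpd, hSin, hSout⟩ := hMstar
  set φ : V × V → V := fun e => if e.1 ∈ FM M then e.2 else e.1 with hφ
  have hsum : Mstar.card = ∑ v, (Mstar.filter (fun e => φ e = v)).card :=
    Finset.card_eq_sum_card_fiberwise (fun e _ => Finset.mem_univ (φ e))
  have hcoins : 2 * M.card = ∑ v, (inDeg M v + outDeg M v) := by
    rw [Finset.sum_add_distrib, sum_inDeg, sum_outDeg, two_mul]
  rw [hsum, hcoins]
  apply Finset.sum_le_sum
  intro v _
  set S : Finset (V × V) := Mstar.filter (fun e => φ e = v) with hS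
  rcases S.eq_empty_or_nonempty with hSe | ⟨e₀, he₀⟩
  · simp [hSe]
  have hmemS : ∀ e ∈ S, e ∈ Mstar ∧ (if e.1 ∈ FM M then e.2 else e.1) = v := by
    intro e he
    exact Finset.mem_filter.mp he
  -- v is not free
  have hvnf : v ∉ FM M := by
    obtain ⟨h0, h0'⟩ := hmemS e₀ he₀
    by_cases hf : e₀.1 ∈ FM M
    · rw [if_pos hf] at h0'
      intro hv
      exact h1 e₀ h0 ⟨hf, h0' ▸ hv⟩
    · rw [if_neg hf] at h0'
      exact h0' ▸ hf
  by_cases hex : ∃ e ∈ S, e.1 ∈ FM M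
  · -- all arcs of S have free tail and head v
    obtain ⟨e₁, he₁, hf₁⟩ := hex
    have he₁2 : e₁.2 = v := by
      have := (hmemS e₁ he₁).2; rwa [if_pos hf₁] at this
    have hvD : v ∈ Dstar := he₁2 ▸ (hSpd e₁ (hmemS e₁ he₁).1).2
    have hall : ∀ e ∈ S, e.1 ∈ FM M ∧ e.2 = v := by
      intro e he
      obtain ⟨hem, hev⟩ := hmemS e he
      by_cases hf : e.1 ∈ FM M
      · rw [if_pos hf] at hev; exact ⟨hf, hev⟩
      · rw [if_neg hf] at hev
        exact absurd (hev ▸ (hSpd e hem).1) (fun h => (Finset.disjoint_left.mp hSdisj h) hvD)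
    -- v is a passenger or a driver of M
    have hvne : ¬ (inDeg M v = 0 ∧ outDeg M v = 0) := by
      intro h; exact hvnf (by simp [FM, h.1, h.2])
    by_cases hin : 0 < inDeg M v
    · -- v ∈ DM M; use h3
      have hvDM : v ∈ DM M := by simp [DM, hin]
      have hcap : inDeg M v = c v :=
        h3 e₁.1 hf₁ v hvDM (by rw [← he₁2]; exact (hmemS e₁ he₁).1)
      have hsub : S ⊆ Mstar.filter (fun e => e.2 = v) := by
        intro e he
        exact Finset.mem_filter.mpr ⟨(hmemS e he).1, (hall e he).2⟩
      calc S.card ≤ inDeg Mstar v := Finset.card_le_card hsub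
        _ ≤ c v := hSin v hvD
        _ = inDeg M v := hcap.symm
        _ ≤ inDeg M v + outDeg M v := Nat.le_add_right _ _
    · -- v ∈ PM M; use h2
      have hin0 : inDeg M v = 0 := Nat.eq_zero_of_not_pos hin
      have hout : 0 < outDeg M v := by
        rcases Nat.eq_zero_or_pos (outDeg M v) with h | h
        · exact absurd ⟨hin0, h⟩ hvne
        · exact h
      obtain ⟨e₂, he₂⟩ := Finset.card_pos.mp hout
      have he₂' := Finset.mem_filter.mp he₂
      have hvP : v ∈ P := he₂'.2 ▸ (hMpd e₂ he₂'.1).1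
      have hout1 : outDeg M v = 1 := le_antisymm (hMout v hvP) hout
      have hvPM : v ∈ PM M := by simp [PM, hout1]
      have hsub : S ⊆ {(e₁.1, v)} := by
        intro e he
        obtain ⟨hf, he2⟩ := hall e he
        have hmem : (e.1, v) ∈ Mstar := by rw [← he2]; exact (hmemS e he).1
        have hmem1 : (e₁.1, v) ∈ Mstar := by rw [← he₁2]; exact (hmemS e₁ he₁).1
        have := h2 v hvPM e.1 hf e₁.1 hf₁ hmem hmem1
        simp only [Finset.mem_singleton]
        rw [← this, ← he2]
      calc S.card ≤ 1 := by simpa using Finset.card_le_card hsub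
        _ = outDeg M v := hout1.symm
        _ ≤ inDeg M v + outDeg M v := Nat.le_add_left _ _
  · -- all arcs of S have tail v
    push_neg at hex
    have hsub : S ⊆ Mstar.filter (fun e => e.1 = v) := by
      intro e he
      obtain ⟨hem, hev⟩ := hmemS e he
      rw [if_neg (hex e he)] at hev
      exact Finset.mem_filter.mpr ⟨hem, hev⟩
    have hvP : v ∈ Pstar := by
      have h0' := (hmemS e₀ he₀).2
      rw [if_neg (hex e₀ he₀)] at h0'
      exact h0' ▸ (hSpd e₀ (hmemS e₀ he₀).1).1
    have h1' : S.card ≤ 1 := le_trans (Finset.card_le_card hsub) (hSout v hvP)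
    have : 0 < inDeg M v + outDeg M v := by
      by_contra h
      push_neg at h
      have := Nat.le_zero.mp h
      exact hvnf (by simp [FM, Nat.eq_zero_of_add_eq_zero_right this,
        Nat.eq_zero_of_add_eq_zero_left this])
    omega
end

section
/- In a charging scheme for local search: if u ∈ P^M (a passenger of M, loaded with 1 coin) then u is charged for at most one arc of M*: either u is a passenger in M* (charged at most once as a tail) or u is a driver in M* charged only for arcs from free vertices of M, of which there is at most one by the exchange property. -/
open Finset

variable {V : Type*} [Fintype V] [DecidableEq V]

/-- The vertex charged for an arc `e` of `Mstar`: its tail if the tail is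
matched in `M`, and its head otherwise. -/
def chargedVertex (M : Finset (V × V)) (e : V × V) : V :=
  if e.1 ∈ PM M ∪ DM M then e.1 else e.2

/-- in the charging scheme, a passenger `u` of `M` is charged for
at most one arc of `Mstar`. -/
theorem passenger_not_overcharged (A : Finset (V × V)) (c : V → ℕ)
    (P D : Finset V) (M : Finset (V × V)) (hM : IsCarpool A c P D M)
    (Pstar Dstar : Finset V) (Mstar : Finset (V × V))
    (hMstar : IsCarpool A c Pstar Dstar Mstar)
    (hexch : ∀ p ∈ PM M, ∀ f₁ ∈ FM M, ∀ f₂ ∈ FM M,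
      (f₁, p) ∈ Mstar → (f₂, p) ∈ Mstar → f₁ = f₂)
    (u : V) (hu : u ∈ PM M) :
    (Mstar.filter (fun e => chargedVertex M e = u)).card ≤ 1 := by
  obtain ⟨hPD, hPDuniv, _, hends, _, houtP⟩ := hM
  obtain ⟨hPD', _, _, hends', _, houtP'⟩ := hMstar
  -- any vertex not in PM ∪ DM is free
  have hfree : ∀ v : V, v ∉ PM M ∪ DM M → v ∈ FM M := by
    intro v hv
    simp only [mem_union, PM, DM, FM, mem_filter, mem_univ, true_and, not_or] at hv ⊢
    have hin : inDeg M v = 0 := by omega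
    have hout : outDeg M v = 0 := by
      have hvPD : v ∈ P ∪ D := hPDuniv ▸ mem_univ v
      rcases mem_union.mp hvPD with h | h
      · have := houtP v h; omega
      · -- v ∈ D ⇒ no outgoing arcs of M (tails are in P, disjoint from D)
        rw [outDeg, Finset.card_eq_zero, Finset.filter_eq_empty_iff]
        intro e he heq
        exact (Finset.disjoint_left.mp hPD (hends e he).1) (heq ▸ h)
    exact ⟨hin, hout⟩
  apply Finset.card_le_one.mpr
  intro e he e' he'
  simp only [mem_filter] at he he'
  obtain ⟨heM, hec⟩ := he
  obtain ⟨heM', hec'⟩ := he'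
  unfold chargedVertex at hec hec'
  by_cases h1 : e.1 ∈ PM M ∪ DM M <;> by_cases h2 : e'.1 ∈ PM M ∪ DM M
  · -- both tail-charged: e.1 = e'.1 = u, u ∈ Pstar, outDeg Mstar u ≤ 1
    rw [if_pos h1] at hec; rw [if_pos h2] at hec'
    have huP : u ∈ Pstar := hec ▸ (hends' e heM).1
    have hcard := houtP' u huP
    rw [outDeg] at hcard
    have he1 : e ∈ Mstar.filter (fun e => e.1 = u) := Finset.mem_filter.mpr ⟨heM, hec⟩
    have he2 : e' ∈ Mstar.filter (fun e => e.1 = u) := Finset.mem_filter.mpr ⟨heM', hec'⟩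
    exact Finset.card_le_one.mp hcard e he1 e' he2
  · -- e tail-charged, e' head-charged: u ∈ Pstar ∩ Dstar, contradiction
    rw [if_pos h1] at hec; rw [if_neg h2] at hec'
    have huP : u ∈ Pstar := hec ▸ (hends' e heM).1
    have huD : u ∈ Dstar := hec' ▸ (hends' e' heM').2
    exact absurd huD (Finset.disjoint_left.mp hPD' huP)
  · rw [if_neg h1] at hec; rw [if_pos h2] at hec'
    have huP : u ∈ Pstar := hec' ▸ (hends' e' heM').1
    have huD : u ∈ Dstar := hec ▸ (hends' e heM).2
    exact absurd huD (Finset.disjoint_left.mp hPD' huP)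
  · -- both head-charged: tails free, use exchange property
    rw [if_neg h1] at hec; rw [if_neg h2] at hec'
    have hf1 := hfree e.1 h1
    have hf2 := hfree e'.1 h2
    have heq : e.1 = e'.1 := by
      apply hexch u hu e.1 hf1 e'.1 hf2
      · rw [← hec]; exact heM
      · rw [← hec']; exact heM'
    exact Prod.ext heq (hec.trans hec'.symm)
end

section
/- In a charging scheme for local search: if u ∈ D^M (a driver of M with in-degree d_M(u), loaded with d_M(u) coins), then u is charged at most d_M(u) coins: either u is a passenger in M* (charged at most 1 ≤ d_M(u)), or u is a driver in M* and is charged only for arcs from free vertices of M, in which case u is saturated (d_M(u) = c(u)) and the number of such arcs is at most c(u). -/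
open Finset

variable {V : Type*} [Fintype V] [DecidableEq V]

/-- in the charging scheme, a driver `u` of `M` (loaded with
`inDeg M u` coins) is charged for at most `inDeg M u` arcs of `Mstar`. -/
theorem driver_not_overcharged (A : Finset (V × V)) (c : V → ℕ)
    (P D : Finset V) (M : Finset (V × V)) (hM : IsCarpool A c P D M)
    (Pstar Dstar : Finset V) (Mstar : Finset (V × V))
    (hMstar : IsCarpool A c Pstar Dstar Mstar)
    (hsat : ∀ f ∈ FM M, (f, u) ∈ Mstar → inDeg M u = c u)
    (hu : u ∈ DM M) :
    (Mstar.filter (fun e => chargedVertex M e = u)).card ≤ inDeg M u := by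
  obtain ⟨hdisj, hcover, hMA, harcs, hcap, hout⟩ := hM
  obtain ⟨hdisj', hcover', hMA', harcs', hcap', hout'⟩ := hMstar
  have huD : 0 < inDeg M u := by simpa [DM] using hu
  set S := Mstar.filter (fun e => chargedVertex M e = u) with hS
  by_cases hA : ∃ e ∈ S, e.1 = u
  · obtain ⟨e0, he0S, he0⟩ := hA
    have he0M : e0 ∈ Mstar := (mem_filter.mp he0S).1
    have huP : u ∈ Pstar := he0 ▸ (harcs' e0 he0M).1
    have hsub : S ⊆ Mstar.filter (fun e => e.1 = u) := by
      intro e heS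
      rw [hS, mem_filter] at heS
      obtain ⟨heM, hch⟩ := heS
      rw [mem_filter]
      refine ⟨heM, ?_⟩
      unfold chargedVertex at hch
      split at hch
      · exact hch
      · exfalso
        have : u ∈ Dstar := hch ▸ (harcs' e heM).2
        exact Finset.disjoint_left.mp hdisj' huP this
    calc S.card ≤ (Mstar.filter (fun e => e.1 = u)).card := card_le_card hsub
      _ ≤ 1 := hout' u huP
      _ ≤ inDeg M u := huD
  · push_neg at hA
    have hout_all : ∀ v, outDeg M v ≤ 1 := by
      intro v
      have hv : v ∈ P ∪ D := hcover ▸ mem_univ v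
      rcases mem_union.mp hv with h | h
      · exact hout v h
      · have hempty : M.filter (fun e => e.1 = v) = ∅ := by
          refine filter_eq_empty_iff.mpr fun e heM he => ?_
          exact Finset.disjoint_left.mp hdisj (he ▸ (harcs e heM).1) h
        simp [outDeg, hempty]
    have key : ∀ e ∈ S, e.1 ∉ PM M ∪ DM M ∧ e.2 = u := by
      intro e heS
      have hch := (mem_filter.mp heS).2
      by_cases h1 : e.1 ∈ PM M ∪ DM M
      · exact absurd (by simpa [chargedVertex, h1] using hch) (hA e heS)
      · exact ⟨h1, by simpa [chargedVertex, h1] using hch⟩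
    rcases S.eq_empty_or_nonempty with hSe | ⟨e0, he0S⟩
    · simp [hSe]
    · obtain ⟨hfree, he02⟩ := key e0 he0S
      have he0M : e0 ∈ Mstar := (mem_filter.mp he0S).1
      have hnPM : e0.1 ∉ PM M := fun h => hfree (mem_union_left _ h)
      have hnDM : e0.1 ∉ DM M := fun h => hfree (mem_union_right _ h)
      have hin0 : inDeg M e0.1 = 0 := by
        by_contra h
        exact hnDM (by simp [DM, Nat.pos_of_ne_zero h])
      have hout0 : outDeg M e0.1 = 0 := by
        have h1 : outDeg M e0.1 ≤ 1 := hout_all e0.1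
        have h2 : outDeg M e0.1 ≠ 1 := fun h => hnPM (by simp [PM, h])
        omega
      have hFM : e0.1 ∈ FM M := by simp [FM, hin0, hout0]
      have hmem : (e0.1, u) ∈ Mstar := by
        rw [← he02]
        simpa using he0M
      have hsatu : inDeg M u = c u := hsat e0.1 hFM hmem
      have huD' : u ∈ Dstar := he02 ▸ (harcs' e0 he0M).2
      have hsub : S ⊆ Mstar.filter (fun e => e.2 = u) := by
        intro e heS
        rw [mem_filter]
        exact ⟨(mem_filter.mp heS).1, (key e heS).2⟩
      calc S.card ≤ inDeg Mstar u := card_le_card hsub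
        _ ≤ c u := hcap' u huD'
        _ = inDeg M u := hsatu.symm
end

section
/- In the undirected, uncapacitated, unweighted variant of the carpool matching problem on a graph with no isolated vertices, the driver set D of any optimal solution in which every passenger is matched is a dominating set, and conversely every dominating set D yields a feasible solution matching all vertices of V \ D; hence the minimum number of drivers over optimal solutions equals the minimum dominating set size. -/
open Finset

variable {V : Type*} [Fintype V] [DecidableEq V]

/-- A spanning-star-forest solution for the undirected graph `H`: a driver set
`D` together with an assignment `μ` matching some passengers to neighboring
drivers (unmatched vertices have `μ v = none`). -/
def IsSol (H : SimpleGraph V) (D : Finset V) (μ : V → Option V) : Prop :=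
  ∀ v d : V, μ v = some d → v ∉ D ∧ d ∈ D ∧ H.Adj v d

/-- The value of a solution: the number of matched passengers. -/
def solValue (μ : V → Option V) : ℕ :=
  (Finset.univ.filter (fun v => (μ v).isSome = true)).card

/-- `D` is a dominating set of `H`. -/
def Dominating (H : SimpleGraph V) (D : Finset V) : Prop :=
  ∀ v ∉ D, ∃ d ∈ D, H.Adj v d

/-- in the undirected, uncapacitated, unweighted variant on a
graph with no isolated vertices: the driver set of any solution matching all of
its passengers is a dominating set; every dominating set `D` yields a solution
matching all vertices of `V \ D`; and the maximum number of matched passengers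
equals `|V|` minus the minimum size of a dominating set. -/
theorem spanning_star_forest_dominating (H : SimpleGraph V)
    (hiso : ∀ v : V, ∃ u : V, H.Adj u v) :
    (∀ (D : Finset V) (μ : V → Option V), IsSol H D μ →
      (∀ p ∉ D, (μ p).isSome = true) → Dominating H D) ∧
    (∀ D : Finset V, Dominating H D →
      ∃ μ : V → Option V, IsSol H D μ ∧ ∀ p ∉ D, (μ p).isSome = true) ∧
    (∃ D₀ : Finset V, Dominating H D₀ ∧
      (∀ D : Finset V, Dominating H D → D₀.card ≤ D.card) ∧
      IsGreatest {k : ℕ | ∃ (D : Finset V) (μ : V → Option V),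
        IsSol H D μ ∧ solValue μ = k} (Fintype.card V - D₀.card)) := by
  classical
  have part2 : ∀ D : Finset V, Dominating H D →
      ∃ μ : V → Option V, IsSol H D μ ∧ ∀ p ∉ D, (μ p).isSome = true := by
    intro D hD
    choose f hf1 hf2 using hD
    refine ⟨fun v => if h : v ∈ D then none else some (f v h), ?_, ?_⟩
    · intro v d hvd
      by_cases h : v ∈ D
      · simp [h] at hvd
      · simp only [h, dif_neg, not_false_iff, Option.some.injEq] at hvd
        subst hvd
        exact ⟨h, hf1 v h, hf2 v h⟩
    · intro p hp; simp [hp]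
  refine ⟨?_, part2, ?_⟩
  · intro D μ hsol hall v hv
    obtain ⟨d, hd⟩ := Option.isSome_iff_exists.mp (hall v hv)
    obtain ⟨_, hdD, hadj⟩ := hsol v d hd
    exact ⟨d, hdD, hadj⟩
  · have huniv : Dominating H (univ : Finset V) := by
      intro v hv; simp at hv
    set S : Set ℕ := {n | ∃ D : Finset V, Dominating H D ∧ D.card = n} with hS
    have hne : S.Nonempty := ⟨(univ : Finset V).card, univ, huniv, rfl⟩
    obtain ⟨D₀, hD₀dom, hD₀card⟩ := Nat.sInf_mem hne
    have hmin : ∀ D : Finset V, Dominating H D → D₀.card ≤ D.card := by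
      intro D hD
      rw [hD₀card]
      exact Nat.sInf_le ⟨D, hD, rfl⟩
    refine ⟨D₀, hD₀dom, hmin, ?_, ?_⟩
    · obtain ⟨μ, hsol, hall⟩ := part2 D₀ hD₀dom
      refine ⟨D₀, μ, hsol, ?_⟩
      have hfilter : (Finset.univ.filter (fun v => (μ v).isSome = true)) = D₀ᶜ := by
        ext v
        simp only [mem_filter, mem_univ, true_and, Finset.mem_compl]
        constructor
        · intro hv hvD
          obtain ⟨d, hd⟩ := Option.isSome_iff_exists.mp hv
          exact (hsol v d hd).1 hvD
        · exact hall v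
      rw [solValue, hfilter, Finset.card_compl]
    · rintro k ⟨D, μ, hsol, rfl⟩
      set M := Finset.univ.filter (fun v => (μ v).isSome = true) with hM
      have hdomc : Dominating H Mᶜ := by
        intro v hv
        have hvM : v ∈ M := by
          by_contra h
          exact hv (Finset.mem_compl.mpr h)
        have : (μ v).isSome = true := (Finset.mem_filter.mp hvM).2
        obtain ⟨d, hd⟩ := Option.isSome_iff_exists.mp this
        obtain ⟨_, hdD, hadj⟩ := hsol v d hd
        refine ⟨d, ?_, hadj⟩
        rw [Finset.mem_compl]
        intro hdM
        have : (μ d).isSome = true := (Finset.mem_filter.mp hdM).2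
        obtain ⟨e, he⟩ := Option.isSome_iff_exists.mp this
        exact (hsol d e he).1 hdD
      have h1 : D₀.card ≤ Mᶜ.card := hmin _ hdomc
      have h2 : Mᶜ.card = Fintype.card V - M.card := Finset.card_compl M
      have h3 : M.card ≤ Fintype.card V := Finset.card_le_univ M
      have : solValue μ = M.card := rfl
      omega
end
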